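/- (Invertibility of the implicit score-driven (ISD) filter, Theorem 1.) Let P ∈ ℝ^{k×k} be symmetric positive definite, α ∈ ℝ with λ_min(P) > α⁻, ω ∈ ℝ^k, Φ ∈ ℝ^{k×k}, and set γ := λ_min(P − ΦᵀPΦ). For each t ≥ 1 let ℓ_t : ℝ^k → ℝ be twice continuously differentiable with α·I ⪯ −∇²ℓ_t(θ) for all θ ∈ ℝ^k. Suppose two sequences (θ_{t|t})_{t≥0} and (θ̃_{t|t})_{t≥0} in ℝ^k satisfy, for every t ≥ 1, the prediction step θ_{t|t−1} = (I − Φ)ω + Φ θ_{t−1|t−1} and the implicit update (first-order condition) θ_{t|t} = θ_{t|t−1} + P⁻¹∇ℓ_t(θ_{t|t}), and likewise for (θ̃_{t|t}) with the same functions ℓ_t but a possibly different starting point θ̃_{0|0}. Then for all t ≥ 0, ‖θ_{t|t} − θ̃_{t|t}‖²_P ≤ τ_im^t · ‖θ_{0|0} − θ̃_{0|0}‖²_P, where τ_im := (1 − γ⁺/λ_max(P) + γ⁻/λ_min(P)) · (1 − α⁺/(λ_max(P) + α⁺) + α⁻/(λ_min(P) − α⁻))². In particular, if τ_im < 1 then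 ‖θ_{t|t} − θ̃_{t|t}‖ → 0 as t → ∞ (exponentially fast) for any starting points. -/

import Mathlib

open Matrix

/-- Smallest eigenvalue of a (Hermitian) real matrix; junk value 0 otherwise. -/
noncomputable def lMin {k : ℕ} (A : Matrix (Fin k) (Fin k) ℝ) : ℝ :=
  letI := Classical.propDecidable A.IsHermitian
  if h : A.IsHermitian then ⨅ i, h.eigenvalues i else 0

/-- Largest eigenvalue of a (Hermitian) real matrix; junk value 0 otherwise. -/
noncomputable def lMax {k : ℕ} (A : Matrix (Fin k) (Fin k) ℝ) : ℝ :=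
  letI := Classical.propDecidable A.IsHermitian
  if h : A.IsHermitian then ⨆ i, h.eigenvalues i else 0

/-- P-weighted squared vector norm `‖x‖_P² = xᵀ P x`. -/
def wq {k : ℕ} (P : Matrix (Fin k) (Fin k) ℝ) (x : Fin k → ℝ) : ℝ := x ⬝ᵥ P *ᵥ x

/-- Induced P-weighted matrix norm `‖A‖_P = sup_{x ≠ 0} ‖Ax‖_P / ‖x‖_P`. -/
noncomputable def wMatNorm {k : ℕ} (P A : Matrix (Fin k) (Fin k) ℝ) : ℝ :=
  sSup {r : ℝ | ∃ x : Fin k → ℝ, x ≠ 0 ∧ r = Real.sqrt (wq P (A *ᵥ x)) / Real.sqrt (wq P x)}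


open Filter

/-!
Write `d_t = θ_t - θ'_t`. The prediction step maps `d` to `Φ d`, and
`‖d‖²_P - ‖Φ d‖²_P = dᵀ (P - ΦᵀPΦ) d ≥ γ |d|²`; comparing `|d|²` with `‖d‖²_P` through `λ_max(P)` or
`λ_min(P)` (according to the sign of `γ`) gives `‖Φ d‖²_P ≤ predictionFactor · ‖d‖²_P`.
Subtracting the two implicit updates gives `P d_{t+1} = P Φ d_t + (∇ℓ_t(θ_t) - ∇ℓ_t(θ'_t))`, and the
curvature bound, integrated along the segment from `θ'_t` to `θ_t`, yields
`⟨d_{t+1}, ∇ℓ_t(θ_t) - ∇ℓ_t(θ'_t)⟩ ≤ -α |d_{t+1}|²`. Hence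
`updateFactor⁻¹ ‖d_{t+1}‖²_P ≤ ⟨d_{t+1}, Φ d_t⟩_P ≤ ‖d_{t+1}‖_P ‖Φ d_t‖_P` by Cauchy–Schwarz,
so each step contracts `‖d‖²_P` by `τ_im = predictionFactor · updateFactor²`.
-/

namespace Matrix.IsHermitian

variable {n : Type*} [Fintype n] [DecidableEq n] {A : Matrix n n ℝ}

theorem exists_dotProduct_mulVec_eq_sum_eigenvalues (hA : A.IsHermitian) (x : n → ℝ) :
    ∃ y : n → ℝ, x ⬝ᵥ A *ᵥ x = ∑ i, hA.eigenvalues i * y i ^ 2 ∧ x ⬝ᵥ x = ∑ i, y i ^ 2 := by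
  obtain ⟨U, hUU, hAU⟩ : ∃ U : Matrix n n ℝ,
      U * star U = 1 ∧ A = U * diagonal hA.eigenvalues * star U := by
    refine ⟨hA.eigenvectorUnitary, mem_unitaryGroup_iff.mp hA.eigenvectorUnitary.2, ?_⟩
    conv_lhs => rw [hA.spectral_theorem, Unitary.conjStarAlgAut_apply]
    rfl
  have hxU : x ᵥ* U = star U *ᵥ x := by
    rw [star_eq_conjTranspose, conjTranspose_eq_transpose_of_trivial, mulVec_transpose]
  refine ⟨star U *ᵥ x, ?_, ?_⟩
  · conv_lhs => rw [hAU]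
    rw [← mulVec_mulVec, ← mulVec_mulVec, dotProduct_mulVec, hxU]
    simp [mulVec_diagonal, dotProduct, sq, mul_left_comm]
  · rw [show x ⬝ᵥ x = x ⬝ᵥ (U * star U) *ᵥ x by rw [hUU, one_mulVec], ← mulVec_mulVec,
      dotProduct_mulVec, hxU]
    simp [dotProduct, sq]

end Matrix.IsHermitian

variable {k : ℕ} {A P : Matrix (Fin k) (Fin k) ℝ}

theorem lMin_mul_dotProduct_self_le (hA : A.IsHermitian) (x : Fin k → ℝ) :
    lMin A * (x ⬝ᵥ x) ≤ x ⬝ᵥ A *ᵥ x := by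
  obtain ⟨y, hAx, hx⟩ := hA.exists_dotProduct_mulVec_eq_sum_eigenvalues x
  rw [hAx, hx, Finset.mul_sum]
  refine Finset.sum_le_sum fun i _ => mul_le_mul_of_nonneg_right ?_ (sq_nonneg _)
  rw [lMin, dif_pos hA]
  exact ciInf_le (Finite.bddBelow_range _) i

theorem dotProduct_mulVec_le_lMax_mul (hA : A.IsHermitian) (x : Fin k → ℝ) :
    x ⬝ᵥ A *ᵥ x ≤ lMax A * (x ⬝ᵥ x) := by
  obtain ⟨y, hAx, hx⟩ := hA.exists_dotProduct_mulVec_eq_sum_eigenvalues x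
  rw [hAx, hx, Finset.mul_sum]
  refine Finset.sum_le_sum fun i _ => mul_le_mul_of_nonneg_right ?_ (sq_nonneg _)
  rw [lMax, dif_pos hA]
  exact le_ciSup (Finite.bddAbove_range _) i

theorem lMin_le_lMax (hA : A.IsHermitian) : lMin A ≤ lMax A := by
  rw [lMin, lMax, dif_pos hA, dif_pos hA]
  rcases isEmpty_or_nonempty (Fin k) with hk | hk
  · simp only [Real.iInf_of_isEmpty, Real.iSup_of_isEmpty, le_refl]
  · exact ciInf_le_ciSup (Finite.bddBelow_range _) (Finite.bddAbove_range _)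

theorem nonempty_of_lMin_pos (h : 0 < lMin A) : Nonempty (Fin k) := by
  by_contra hk
  rw [not_nonempty_iff] at hk
  unfold lMin at h
  split_ifs at h <;> simp at h

theorem sq_dotProduct_mulVec_le (hP : P.PosSemidef) (x y : Fin k → ℝ) :
    (x ⬝ᵥ P *ᵥ y) ^ 2 ≤ wq P x * wq P y := by
  let := P.toSeminormedAddCommGroup hP
  let := P.toInnerProductSpace hP
  have hinner : ∀ u v : Fin k → ℝ, inner ℝ u v = u ⬝ᵥ P *ᵥ v := fun u v => by
    change (P *ᵥ v) ⬝ᵥ star u = _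
    rw [star_trivial, dotProduct_comm]
  simpa only [sq, wq, hinner] using real_inner_mul_inner_self_le x y

theorem norm_le_sqrt_dotProduct_self (x : Fin k → ℝ) : ‖x‖ ≤ √(x ⬝ᵥ x) :=
  (pi_norm_le_iff_of_nonneg (Real.sqrt_nonneg _)).2 fun i => Real.abs_le_sqrt <|
    (sq (x i) ▸ Finset.single_le_sum (fun j _ => mul_self_nonneg (x j)) (Finset.mem_univ i) :)

noncomputable def predictionFactor (P Φ : Matrix (Fin k) (Fin k) ℝ) : ℝ :=
  1 - max (lMin (P - Φᵀ * P * Φ)) 0 / lMax P + max (-lMin (P - Φᵀ * P * Φ)) 0 / lMin P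

noncomputable def updateFactor (P : Matrix (Fin k) (Fin k) ℝ) (α : ℝ) : ℝ :=
  1 - max α 0 / (lMax P + max α 0) + max (-α) 0 / (lMin P - max (-α) 0)

section Contraction

variable (hP : P.IsHermitian) (hP0 : 0 < lMin P)
include hP hP0

theorem div_lMax_mul_wq_le {c : ℝ} (hc : 0 ≤ c) (x : Fin k → ℝ) :
    c / lMax P * wq P x ≤ c * (x ⬝ᵥ x) := by
  have hM : 0 < lMax P := hP0.trans_le (lMin_le_lMax hP)
  rw [div_mul_eq_mul_div, div_le_iff₀ hM, mul_assoc]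
  exact mul_le_mul_of_nonneg_left
    ((dotProduct_mulVec_le_lMax_mul hP x).trans_eq (mul_comm _ _)) hc

theorem div_lMin_mul_wq_le {c : ℝ} (hc : c ≤ 0) (x : Fin k → ℝ) :
    c / lMin P * wq P x ≤ c * (x ⬝ᵥ x) := by
  rw [div_mul_eq_mul_div, div_le_iff₀ hP0, mul_assoc]
  exact mul_le_mul_of_nonpos_left
    ((mul_comm _ _).trans_le (lMin_mul_dotProduct_self_le hP x)) hc

theorem wq_nonneg (x : Fin k → ℝ) : 0 ≤ wq P x :=
  (mul_nonneg hP0.le (dotProduct_self_star_nonneg x)).trans (lMin_mul_dotProduct_self_le hP x)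

theorem wq_mulVec_le_predictionFactor_mul (Φ : Matrix (Fin k) (Fin k) ℝ) (x : Fin k → ℝ) :
    wq P (Φ *ᵥ x) ≤ predictionFactor P Φ * wq P x := by
  have hQ : (P - Φᵀ * P * Φ).IsHermitian :=
    hP.sub (conjTranspose_eq_transpose_of_trivial Φ ▸ isHermitian_conjTranspose_mul_mul Φ hP)
  have hγ : lMin (P - Φᵀ * P * Φ) * (x ⬝ᵥ x) ≤ wq P x - wq P (Φ *ᵥ x) := by
    convert lMin_mul_dotProduct_self_le hQ x using 1
    rw [wq, wq, sub_mulVec, dotProduct_sub, ← mulVec_mulVec, ← mulVec_mulVec,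
      dotProduct_mulVec x Φᵀ, vecMul_transpose]
  rcases le_total 0 (lMin (P - Φᵀ * P * Φ)) with h | h
  · have := div_lMax_mul_wq_le hP hP0 h x
    rw [predictionFactor, max_eq_left h, max_eq_right (neg_nonpos.2 h), zero_div, add_zero,
      sub_mul, one_mul]
    linarith
  · have := div_lMin_mul_wq_le hP hP0 h x
    rw [predictionFactor, max_eq_right h, max_eq_left (neg_nonneg.2 h), zero_div, sub_zero,
      add_mul, one_mul, neg_div, neg_mul]
    linarith

theorem predictionFactor_nonneg (Φ : Matrix (Fin k) (Fin k) ℝ) : 0 ≤ predictionFactor P Φ := by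
  obtain ⟨i⟩ := nonempty_of_lMin_pos hP0
  have hx : 0 < wq P (Pi.single i 1) := by
    refine lt_of_lt_of_le ?_ (lMin_mul_dotProduct_self_le hP _)
    simpa [dotProduct_single] using hP0
  exact nonneg_of_mul_nonneg_left
    ((wq_nonneg hP hP0 _).trans (wq_mulVec_le_predictionFactor_mul hP hP0 Φ _)) hx

end Contraction

section Update

variable {α : ℝ} (hP : P.IsHermitian) (hα : max (-α) 0 < lMin P)
include hP hα

theorem updateFactor_pos : 0 < updateFactor P α := by
  have hP0 : 0 < lMin P := (le_max_right _ _).trans_lt hα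
  have hM : 0 < lMax P := hP0.trans_le (lMin_le_lMax hP)
  rcases le_or_gt 0 α with h | h
  · rw [updateFactor, max_eq_left h, max_eq_right (neg_nonpos.2 h), zero_div, add_zero, sub_pos,
      div_lt_one (by positivity)]
    linarith
  · rw [updateFactor, max_eq_right h.le, zero_div, sub_zero]
    have : 0 ≤ max (-α) 0 / (lMin P - max (-α) 0) := div_nonneg (le_max_right _ _) (by linarith)
    linarith

theorem inv_updateFactor_mul_wq_le (d : Fin k → ℝ) :
    (updateFactor P α)⁻¹ * wq P d ≤ wq P d + α * (d ⬝ᵥ d) := by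
  have hP0 : 0 < lMin P := (le_max_right _ _).trans_lt hα
  have hM : 0 < lMax P := hP0.trans_le (lMin_le_lMax hP)
  rcases le_or_gt 0 α with h | h
  · have hinv : (updateFactor P α)⁻¹ = 1 + α / lMax P := by
      rw [updateFactor, max_eq_left h, max_eq_right (neg_nonpos.2 h), zero_div, add_zero]
      field_simp [hM.ne']
      ring
    rw [hinv, add_mul, one_mul]
    linarith [div_lMax_mul_wq_le hP hP0 h d]
  · have hm : 0 < lMin P + α := by rw [max_eq_left (by linarith)] at hα; linarith
    have hinv : (updateFactor P α)⁻¹ = 1 + α / lMin P := by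
      rw [updateFactor, max_eq_right h.le, max_eq_left (by linarith), zero_div, sub_zero,
        sub_neg_eq_add]
      field_simp [hP0.ne', hm.ne']
      ring
    rw [hinv, add_mul, one_mul]
    linarith [div_lMin_mul_wq_le hP hP0 h.le d]

end Update

theorem le_sq_mul_of_inv_mul_le {a b c s : ℝ} (hc : 0 < c) (ha : 0 ≤ a) (hb : 0 ≤ b)
    (h : c⁻¹ * a ≤ s) (hs : s ^ 2 ≤ a * b) : a ≤ c ^ 2 * b := by
  have has : a ≤ c * s := by rwa [inv_mul_le_iff₀ hc] at h
  rcases ha.eq_or_lt with rfl | ha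
  · positivity
  · have : a * a ≤ a * (c ^ 2 * b) := by nlinarith [mul_self_le_mul_self ha.le has]
    exact le_of_mul_le_mul_left this ha

theorem wq_sub_le_updateFactor_sq_mul {α : ℝ} (hP : P.PosDef) (hα : max (-α) 0 < lMin P)
    {a b m m' g g' : Fin k → ℝ} (ha : a = m + P⁻¹ *ᵥ g) (hb : b = m' + P⁻¹ *ᵥ g')
    (hmono : (a - b) ⬝ᵥ (g - g') ≤ -α * ((a - b) ⬝ᵥ (a - b))) :
    wq P (a - b) ≤ updateFactor P α ^ 2 * wq P (m - m') := by
  have hP0 : 0 < lMin P := (le_max_right _ _).trans_lt hα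
  have hPinv : P * P⁻¹ = 1 := mul_nonsing_inv P (isUnit_iff_ne_zero.2 hP.det_pos.ne')
  have hstep : P *ᵥ (a - b) = P *ᵥ (m - m') + (g - g') := by
    rw [ha, hb, mulVec_sub, mulVec_sub, mulVec_add, mulVec_add, mulVec_mulVec, mulVec_mulVec,
      hPinv, one_mulVec, one_mulVec]
    abel
  have hcoupling : wq P (a - b) + α * ((a - b) ⬝ᵥ (a - b)) ≤ (a - b) ⬝ᵥ P *ᵥ (m - m') := by
    have : wq P (a - b) = (a - b) ⬝ᵥ P *ᵥ (m - m') + (a - b) ⬝ᵥ (g - g') := by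
      rw [wq, hstep, dotProduct_add]
    linarith
  exact le_sq_mul_of_inv_mul_le (updateFactor_pos hP.1 hα) (wq_nonneg hP.1 hP0 _)
    (wq_nonneg hP.1 hP0 _)
    ((inv_updateFactor_mul_wq_le hP.1 hα _).trans hcoupling)
    (sq_dotProduct_mulVec_le hP.posSemidef _ _)

theorem sub_dotProduct_map_sub_le {n : Type*} [Fintype n] [DecidableEq n] {α : ℝ}
    {G : (n → ℝ) → n → ℝ} {H : (n → ℝ) → Matrix n n ℝ}
    (hG : ∀ u, HasFDerivAt G (LinearMap.toContinuousLinearMap (H u).mulVecLin) u)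
    (hH : ∀ u, (-(H u) - α • (1 : Matrix n n ℝ)).PosSemidef) (u u' : n → ℝ) :
    (u - u') ⬝ᵥ (G u - G u') ≤ -α * ((u - u') ⬝ᵥ (u - u')) := by
  set d := u - u'
  let seg : ℝ → n → ℝ := fun s => u' + s • d
  have hseg : ∀ s, HasDerivAt seg d s := fun s => by
    simpa only [id, one_smul] using ((hasDerivAt_id s).smul_const d).const_add u'
  have hderiv : ∀ s, HasDerivAt (fun s => d ⬝ᵥ G (seg s) + α * s * (d ⬝ᵥ d))
      (d ⬝ᵥ H (seg s) *ᵥ d + α * (d ⬝ᵥ d)) s := fun s => by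
    have hGseg := (hG (seg s)).comp_hasDerivAt s (hseg s)
    have hdot : HasDerivAt (fun s => d ⬝ᵥ G (seg s)) (d ⬝ᵥ H (seg s) *ᵥ d) s := by
      simpa [dotProduct] using HasDerivAt.fun_sum fun i _ =>
        (hasDerivAt_pi.1 hGseg i).const_mul (d i)
    simpa only [id, mul_one] using
      hdot.fun_add (((hasDerivAt_id s).const_mul α).mul_const (d ⬝ᵥ d))
  have hnonpos : ∀ s, d ⬝ᵥ H (seg s) *ᵥ d + α * (d ⬝ᵥ d) ≤ 0 := fun s => by
    have := (hH (seg s)).dotProduct_mulVec_nonneg d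
    simp only [sub_mulVec, neg_mulVec, smul_mulVec, one_mulVec, dotProduct_sub, dotProduct_neg,
      dotProduct_smul, smul_eq_mul, star_trivial] at this
    linarith
  have hanti := antitone_of_hasDerivAt_nonpos hderiv hnonpos zero_le_one
  simp only [seg, zero_smul, add_zero, one_smul, mul_zero, zero_mul, mul_one] at hanti
  rw [show u' + d = u by simp [d]] at hanti
  rw [dotProduct_sub]
  linarith

theorem tendsto_norm_of_wq_le_geom (hP : P.IsHermitian) (hP0 : 0 < lMin P)
    {x : ℕ → Fin k → ℝ} {τ C : ℝ} (hτ0 : 0 ≤ τ) (hτ1 : τ < 1)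
    (hx : ∀ t, wq P (x t) ≤ τ ^ t * C) :
    Tendsto (fun t => ‖x t‖) atTop (nhds 0) := by
  have hbound : ∀ t, ‖x t‖ ≤ √(τ ^ t * (C / lMin P)) := fun t => by
    refine (norm_le_sqrt_dotProduct_self _).trans (Real.sqrt_le_sqrt ?_)
    rw [← mul_div_assoc, le_div_iff₀ hP0, mul_comm]
    exact (lMin_mul_dotProduct_self_le hP _).trans (hx t)
  have hlim : Tendsto (fun t : ℕ => √(τ ^ t * (C / lMin P))) atTop (nhds 0) := by
    simpa using ((tendsto_pow_atTop_nhds_zero_of_lt_one hτ0 hτ1).mul_const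
      (C / lMin P)).sqrt
  exact squeeze_zero (fun t => norm_nonneg _) hbound hlim

theorem isd_filter_invertibility_general {k : ℕ}
    (P Φ : Matrix (Fin k) (Fin k) ℝ) (hP : P.PosDef) (ω : Fin k → ℝ)
    (α : ℝ) (hpen : max (-α) 0 < lMin P)
    (G : ℕ → (Fin k → ℝ) → (Fin k → ℝ))
    (Hs : ℕ → (Fin k → ℝ) → Matrix (Fin k) (Fin k) ℝ)
    (hhess : ∀ t θv, HasFDerivAt (G t)
      (LinearMap.toContinuousLinearMap (Hs t θv).mulVecLin) θv)
    (hcurv : ∀ t θv, (-(Hs t θv) - α • (1 : Matrix (Fin k) (Fin k) ℝ)).PosSemidef)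
    (θ θ' : ℕ → (Fin k → ℝ))
    (hrec : ∀ t : ℕ,
      θ (t + 1) = ((1 - Φ) *ᵥ ω + Φ *ᵥ θ t) + P⁻¹ *ᵥ G (t + 1) (θ (t + 1)))
    (hrec' : ∀ t : ℕ,
      θ' (t + 1) = ((1 - Φ) *ᵥ ω + Φ *ᵥ θ' t) + P⁻¹ *ᵥ G (t + 1) (θ' (t + 1)))
    (τ : ℝ)
    (hτ : τ =
      (1 - max (lMin (P - Φᵀ * P * Φ)) 0 / lMax P
         + max (-lMin (P - Φᵀ * P * Φ)) 0 / lMin P)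
      * (1 - max α 0 / (lMax P + max α 0)
           + max (-α) 0 / (lMin P - max (-α) 0)) ^ 2) :
    (∀ t : ℕ, wq P (θ t - θ' t) ≤ τ ^ t * wq P (θ 0 - θ' 0)) ∧
      (τ < 1 → Tendsto (fun t => ‖θ t - θ' t‖) atTop (nhds 0)) := by
  have hP0 : 0 < lMin P := (le_max_right _ _).trans_lt hpen
  replace hτ : τ = predictionFactor P Φ * updateFactor P α ^ 2 := hτ
  have hτ0 : 0 ≤ τ := hτ ▸ mul_nonneg (predictionFactor_nonneg hP.1 hP0 Φ) (sq_nonneg _)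
  have hstep : ∀ t, wq P (θ (t + 1) - θ' (t + 1)) ≤ τ * wq P (θ t - θ' t) := fun t => by
    have hpred : ((1 - Φ) *ᵥ ω + Φ *ᵥ θ t) - ((1 - Φ) *ᵥ ω + Φ *ᵥ θ' t) = Φ *ᵥ (θ t - θ' t) := by
      rw [mulVec_sub]; abel
    calc wq P (θ (t + 1) - θ' (t + 1))
        ≤ updateFactor P α ^ 2 * wq P (Φ *ᵥ (θ t - θ' t)) :=
          hpred ▸ wq_sub_le_updateFactor_sq_mul hP hpen (hrec t) (hrec' t)
            (sub_dotProduct_map_sub_le (hhess (t + 1)) (hcurv (t + 1)) _ _)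
      _ ≤ updateFactor P α ^ 2 * (predictionFactor P Φ * wq P (θ t - θ' t)) := by
          gcongr; exact wq_mulVec_le_predictionFactor_mul hP.1 hP0 Φ _
      _ = τ * wq P (θ t - θ' t) := by rw [hτ]; ring
  have hgeom : ∀ t, wq P (θ t - θ' t) ≤ τ ^ t * wq P (θ 0 - θ' 0) :=
    fun t => le_geom (u := fun t => wq P (θ t - θ' t)) hτ0 t fun s _ => hstep s
  exact ⟨hgeom, fun hτ1 => tendsto_norm_of_wq_le_geom hP.1 hP0 hτ0 hτ1 hgeom⟩

/-- Theorem 1 (Invertibility of the implicit score-driven filter).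
`ℓ t` is the postulated log density at time `t` (data absorbed), `G t = ∇ℓ t` its gradient and
`Hs t = ∇²ℓ t` its (continuous, symmetric) Hessian satisfying `α·I ⪯ −∇²ℓ_t(θ)` everywhere, with
`λ_min(P) > α⁻`.  Any two filtered paths driven by the prediction step
`θ_{t|t−1} = (I − Φ)ω + Φθ_{t−1|t−1}` and the implicit update
`θ_{t|t} = θ_{t|t−1} + P⁻¹∇ℓ_t(θ_{t|t})` satisfy
`‖θ_{t|t} − θ̃_{t|t}‖²_P ≤ τ_im^t ‖θ_{0|0} − θ̃_{0|0}‖²_P`; if `τ_im < 1` they converge to each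
other exponentially fast. -/
theorem isd_filter_invertibility {k : ℕ}
    (P Φ : Matrix (Fin k) (Fin k) ℝ) (hP : P.PosDef) (ω : Fin k → ℝ)
    (α : ℝ) (hpen : max (-α) 0 < lMin P)
    (ℓ : ℕ → (Fin k → ℝ) → ℝ)
    (G : ℕ → (Fin k → ℝ) → (Fin k → ℝ))
    (Hs : ℕ → (Fin k → ℝ) → Matrix (Fin k) (Fin k) ℝ)
    (hgrad : ∀ t θv, HasFDerivAt (ℓ t)
      (∑ i, G t θv i • (ContinuousLinearMap.proj i : (Fin k → ℝ) →L[ℝ] ℝ)) θv)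
    (hhess : ∀ t θv, HasFDerivAt (G t)
      (LinearMap.toContinuousLinearMap (Hs t θv).mulVecLin) θv)
    (hHscont : ∀ t, Continuous (Hs t))
    (hHssymm : ∀ t θv, (Hs t θv).IsHermitian)
    (hcurv : ∀ t θv, (-(Hs t θv) - α • (1 : Matrix (Fin k) (Fin k) ℝ)).PosSemidef)
    (θ θ' : ℕ → (Fin k → ℝ))
    (hrec : ∀ t : ℕ,
      θ (t + 1) = ((1 - Φ) *ᵥ ω + Φ *ᵥ θ t) + P⁻¹ *ᵥ G (t + 1) (θ (t + 1)))
    (hrec' : ∀ t : ℕ,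
      θ' (t + 1) = ((1 - Φ) *ᵥ ω + Φ *ᵥ θ' t) + P⁻¹ *ᵥ G (t + 1) (θ' (t + 1)))
    (τ : ℝ)
    (hτ : τ =
      (1 - max (lMin (P - Φᵀ * P * Φ)) 0 / lMax P
         + max (-lMin (P - Φᵀ * P * Φ)) 0 / lMin P)
      * (1 - max α 0 / (lMax P + max α 0)
           + max (-α) 0 / (lMin P - max (-α) 0)) ^ 2) :
    (∀ t : ℕ, wq P (θ t - θ' t) ≤ τ ^ t * wq P (θ 0 - θ' 0)) ∧
      (τ < 1 → Tendsto (fun t => ‖θ t - θ' t‖) atTop (nhds 0)) :=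
  isd_filter_invertibility_general P Φ hP ω α hpen G Hs hhess hcurv θ θ' hrec hrec' τ hτ
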